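/- Assume r ≥ 3, T ≥ 2, and strictly increasing scores u_1 < ⋯ < u_r. Then the design matrix X has full column rank; its number of columns equals (T² + 3T − 6)/2 + C(r+T−1, T), where C(r+T−1, T) = (r+T−1)!/((r−1)!·T!) is the number of orbits D(i) in I_V. -/

import Mathlib

open Finset

namespace GSf

variable {r T : ℕ}

/-- A cell of the `r^T` contingency table. -/
abbrev Cell (r T : ℕ) := Fin T → Fin r

/-- `orbit i = D(i)`: the set of coordinate permutations of the cell `i`. -/
def orbit (i : Cell r T) : Finset (Cell r T) :=
  Finset.univ.filter fun j => ∃ σ : Equiv.Perm (Fin T), j = i ∘ σ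

/-- Symmetrization `π^S_i = (1/|D(i)|) ∑_{j ∈ D(i)} π_j`. -/
noncomputable def symmz (π : Cell r T → ℝ) (i : Cell r T) : ℝ :=
  (∑ j ∈ orbit i, π j) / ((orbit i).card : ℝ)

/-- The quadratic predictor `u_iᵀ α + u_iᵀ B u_i`. -/
def quadForm (u : Fin r → ℝ) (α : Fin T → ℝ) (B : Matrix (Fin T) (Fin T) ℝ)
    (i : Cell r T) : ℝ :=
  (∑ s, α s * u (i s)) + ∑ s, ∑ t, B s t * u (i s) * u (i t)

/-- A function on cells is orbit-invariant if it is constant on each `D(i)`. -/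
def OrbitInvariant (γ : Cell r T → ℝ) : Prop :=
  ∀ i j, j ∈ orbit i → γ i = γ j

/-- The `f`-divergence `D_f(p ∥ q) = ∑ q_i f(p_i/q_i)`. -/
noncomputable def Df (f : ℝ → ℝ) (p q : Cell r T → ℝ) : ℝ :=
  ∑ i, q i * f (p i / q i)

/-- Conditional probability of a cell given its symmetric set. -/
noncomputable def condProb (π : Cell r T → ℝ) (i : Cell r T) : ℝ :=
  π i / ∑ j ∈ orbit i, π j

/-- Complete symmetry (S) model. -/
def CompletelySymmetric (π : Cell r T → ℝ) : Prop :=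
  ∀ i, ∀ j ∈ orbit i, π i = π j

/-- Marginal mean `μ_s = ∑_i u_{i_s} π_i`. -/
noncomputable def margMean (u : Fin r → ℝ) (π : Cell r T → ℝ) (s : Fin T) : ℝ :=
  ∑ i, u (i s) * π i

/-- Marginal second moment `∑_i u_{i_s}² π_i`. -/
noncomputable def margSecond (u : Fin r → ℝ) (π : Cell r T → ℝ) (s : Fin T) : ℝ :=
  ∑ i, u (i s) ^ 2 * π i

/-- Mixed moment `∑_i u_{i_s} u_{i_t} π_i`. -/
noncomputable def mixedMoment (u : Fin r → ℝ) (π : Cell r T → ℝ) (s t : Fin T) : ℝ :=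
  ∑ i, u (i s) * u (i t) * π i

/-- Marginal variance `σ_s²`. -/
noncomputable def margVar (u : Fin r → ℝ) (π : Cell r T → ℝ) (s : Fin T) : ℝ :=
  margSecond u π s - (margMean u π s) ^ 2

/-- Marginal correlation `ρ_{st}`. -/
noncomputable def margCorr (u : Fin r → ℝ) (π : Cell r T → ℝ) (s t : Fin T) : ℝ :=
  (mixedMoment u π s t - margMean u π s * margMean u π t) /
    (Real.sqrt (margVar u π s) * Real.sqrt (margVar u π t))

/-- The GS[f] model. -/
def IsGSf (u : Fin r → ℝ) (F : ℝ → ℝ) (π : Cell r T → ℝ) : Prop :=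
  ∃ (α : Fin T → ℝ) (B : Matrix (Fin T) (Fin T) ℝ) (γ : Cell r T → ℝ),
    B.IsSymm ∧ OrbitInvariant γ ∧
    ∀ i, F (π i / symmz π i) = quadForm u α B i + γ i

/-- Index type of unordered pairs `s < t`, ordered lexicographically. -/
def PairIdx (T : ℕ) : Type := {p : Fin T × Fin T // p.1 < p.2}

instance : Fintype (PairIdx T) := Subtype.fintype _

/-- Lexicographic linear order on pairs, via the injection `(s,t) ↦ s*T + t`. -/
noncomputable instance : LinearOrder (PairIdx T) :=
  LinearOrder.lift' (fun p : PairIdx T => T * p.val.1.val + p.val.2.val) (by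
    intro a b h
    have hT : 0 < T := a.val.1.pos
    simp only at h
    have h2 : a.val.2.val = b.val.2.val := by
      have hm := congrArg (· % T) h
      simpa [Nat.mul_add_mod, Nat.mod_eq_of_lt a.val.2.isLt,
        Nat.mod_eq_of_lt b.val.2.isLt] using hm
    have h1 : a.val.1.val = b.val.1.val := by
      rw [h2] at h
      exact Nat.eq_of_mul_eq_mul_left hT (Nat.add_right_cancel h)
    exact Subtype.ext (Prod.ext (Fin.ext h1) (Fin.ext h2)))

/-- The increasing (lexicographic) enumeration of the pairs. -/
noncomputable def pairEnum (T : ℕ) : Fin (Fintype.card (PairIdx T)) ≃o PairIdx T :=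
  monoEquivOfFin _ rfl

/-- The column `s_{s_k} ⊙ s_{t_k}` for the `k`-th pair in lexicographic order. -/
noncomputable def pairCol (u : Fin r → ℝ) (k : Fin (Fintype.card (PairIdx T))) :
    Cell r T → ℝ :=
  fun i => u (i (pairEnum T k).val.1) * u (i (pairEnum T k).val.2)

/-- Indicator column of the orbit of `i₀` (a column of `X^S`). -/
def indicatorCol (i₀ : Cell r T) : Cell r T → ℝ :=
  fun i => if i ∈ orbit i₀ then 1 else 0

/-- The columns `Δ₁^{(h)}, Δ₂^{(h)}, Δ_{V₂}^{(k)}` of the design matrix. -/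
noncomputable def deltaCols (u : Fin r → ℝ) : Set (Cell r T → ℝ) :=
  {v | ∃ (h : ℕ) (hh : h + 1 < T),
      v = fun i => u (i ⟨h, Nat.lt_of_succ_lt hh⟩) - u (i ⟨h + 1, hh⟩)} ∪
  {v | ∃ (h : ℕ) (hh : h + 1 < T),
      v = fun i => u (i ⟨h, Nat.lt_of_succ_lt hh⟩) ^ 2 - u (i ⟨h + 1, hh⟩) ^ 2} ∪
  {v | ∃ (k : ℕ) (hk : k + 1 < Fintype.card (PairIdx T)),
      v = pairCol u ⟨k, Nat.lt_of_succ_lt hk⟩ - pairCol u ⟨k + 1, hk⟩}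

/-- The set of columns of the design matrix `X`. -/
noncomputable def designColSet (u : Fin r → ℝ) : Set (Cell r T → ℝ) :=
  deltaCols u ∪ {v | ∃ i₀, v = indicatorCol i₀}


/-- The column index type of the design matrix `X`: the `Δ₁` columns, the `Δ₂` columns,
the `Δ_{V₂}` columns, and one indicator column per orbit. -/
abbrev ColIdx (r T : ℕ) : Type :=
  (Fin (T - 1) ⊕ Fin (T - 1)) ⊕
    (Fin (Fintype.card (PairIdx T) - 1) ⊕
      {O : Finset (Cell r T) // ∃ i : Cell r T, O = orbit i})

/-- The family of columns of the design matrix `X`. -/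
noncomputable def colFam (u : Fin r → ℝ) : ColIdx r T → (Cell r T → ℝ)
  | Sum.inl (Sum.inl h) => fun i =>
      u (i ⟨h.val, by have := h.isLt; omega⟩) -
        u (i ⟨h.val + 1, by have := h.isLt; omega⟩)
  | Sum.inl (Sum.inr h) => fun i =>
      u (i ⟨h.val, by have := h.isLt; omega⟩) ^ 2 -
        u (i ⟨h.val + 1, by have := h.isLt; omega⟩) ^ 2
  | Sum.inr (Sum.inl k) =>
      pairCol u ⟨k.val, by have := k.isLt; omega⟩ -
        pairCol u ⟨k.val + 1, by have := k.isLt; omega⟩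
  | Sum.inr (Sum.inr O) => fun i => if i ∈ O.val then 1 else 0

lemma mem_orbit_iff {i j : Cell r T} :
    j ∈ orbit i ↔ ∃ σ : Equiv.Perm (Fin T), j = i ∘ σ := by
  simp [orbit]

lemma mem_orbit_self (i : Cell r T) : i ∈ orbit i :=
  mem_orbit_iff.mpr ⟨Equiv.refl _, rfl⟩

lemma orbit_eq_of_mem {i j : Cell r T} (h : j ∈ orbit i) : orbit j = orbit i := by
  obtain ⟨σ, rfl⟩ := mem_orbit_iff.mp h
  ext k
  simp only [mem_orbit_iff]
  constructor
  · rintro ⟨τ, rfl⟩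
    exact ⟨τ.trans σ, rfl⟩
  · rintro ⟨τ, rfl⟩
    exact ⟨τ.trans σ.symm, by ext x; simp⟩

lemma comp_mem_orbit_iff {i i₀ : Cell r T} (σ : Equiv.Perm (Fin T)) :
    i ∘ σ ∈ orbit i₀ ↔ i ∈ orbit i₀ := by
  simp only [mem_orbit_iff]
  constructor
  · rintro ⟨τ, h⟩
    exact ⟨σ.symm.trans τ, by
      funext x
      have := congrFun h (σ.symm x)
      simpa using this⟩
  · rintro ⟨τ, rfl⟩
    exact ⟨σ.trans τ, rfl⟩

/-- symmetrization kills single-coordinate differences -/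
lemma sum_perm_coord (v : Fin T → ℝ) (s t : Fin T) :
    ∑ σ : Equiv.Perm (Fin T), v (σ s) = ∑ σ : Equiv.Perm (Fin T), v (σ t) := by
  refine Fintype.sum_equiv (Equiv.mulRight (Equiv.swap s t)) _ _ fun σ => ?_
  simp [Equiv.Perm.mul_apply]

lemma exists_perm_pair {s t s' t' : Fin T} (hst : s ≠ t) (hst' : s' ≠ t') :
    ∃ τ : Equiv.Perm (Fin T), τ s' = s ∧ τ t' = t := by
  have h1 : Equiv.swap s s' s' = s := Equiv.swap_apply_right s s'
  have ht''s : Equiv.swap s s' t' ≠ s := by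
    intro h
    exact hst' ((Equiv.swap s s').injective (h.trans h1.symm)).symm
  refine ⟨(Equiv.swap s s').trans (Equiv.swap t (Equiv.swap s s' t')), ?_, ?_⟩
  · simp only [Equiv.trans_apply, h1]
    exact Equiv.swap_apply_of_ne_of_ne hst (Ne.symm ht''s)
  · simp only [Equiv.trans_apply]
    exact Equiv.swap_apply_right _ _

lemma sum_perm_pair (w : Fin T → Fin T → ℝ) {s t s' t' : Fin T}
    (hst : s ≠ t) (hst' : s' ≠ t') :
    ∑ σ : Equiv.Perm (Fin T), w (σ s) (σ t) =
      ∑ σ : Equiv.Perm (Fin T), w (σ s') (σ t') := by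
  obtain ⟨τ, h1, h2⟩ := exists_perm_pair hst hst'
  refine Fintype.sum_equiv (Equiv.mulRight τ) _ _ fun σ => ?_
  simp [Equiv.Perm.mul_apply, h1, h2]



/-- telescoping -/
def prevf (f : ℕ → ℝ) : ℕ → ℝ
  | 0 => 0
  | n + 1 => f n

lemma telescope (f v : ℕ → ℝ) (n : ℕ) (hf : ∀ m, n ≤ m → f m = 0) :
    ∑ s ∈ Finset.range (n + 1), (f s - prevf f s) * v s
      = ∑ h ∈ Finset.range n, f h * (v h - v (h + 1)) := by
  have h1 : ∑ s ∈ range (n + 1), (f s - prevf f s) * v s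
      = ∑ s ∈ range (n + 1), f s * v s - ∑ s ∈ range (n + 1), prevf f s * v s := by
    rw [← Finset.sum_sub_distrib]
    exact Finset.sum_congr rfl fun s _ => by ring
  rw [h1, Finset.sum_range_succ, hf n le_rfl, zero_mul, add_zero,
    Finset.sum_range_succ' (fun s => prevf f s * v s) n]
  simp only [prevf, zero_mul, add_zero]
  rw [← Finset.sum_sub_distrib]
  exact Finset.sum_congr rfl fun s _ => by ring

lemma untelescope (f : ℕ → ℝ) (n : ℕ) (hd : ∀ s, s < n + 1 → f s - prevf f s = 0)
    (hf : ∀ m, n ≤ m → f m = 0) : ∀ m, f m = 0 := by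
  intro m
  induction m with
  | zero => simpa [prevf] using hd 0 (Nat.succ_pos n)
  | succ m ih =>
      by_cases h : n ≤ m + 1
      · exact hf _ h
      · have h2 := hd (m + 1) (by omega)
        simp only [prevf] at h2
        linarith

/-- multiset of a cell -/
def msetOf (i : Cell r T) : Multiset (Fin r) := Multiset.map i Finset.univ.val

lemma msetOf_card (i : Cell r T) : Multiset.card (msetOf i) = T := by
  simp [msetOf]

lemma msetOf_coe (i : Cell r T) : msetOf i = ↑(List.ofFn i) := by
  rw [msetOf, List.ofFn_eq_map, Fin.univ_def]
  rfl

lemma msetOf_eq_iff {i j : Cell r T} : msetOf i = msetOf j ↔ j ∈ orbit i := by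
  constructor
  · intro h
    rw [msetOf_coe, msetOf_coe, Multiset.coe_eq_coe] at h
    set σi := Tuple.sort i
    set σj := Tuple.sort j
    have hperm : List.Perm (List.ofFn (i ∘ σi)) (List.ofFn (j ∘ σj)) :=
      ((σi.ofFn_comp_perm i).trans h).trans (σj.ofFn_comp_perm j).symm
    have heq : i ∘ σi = j ∘ σj :=
      List.ofFn_injective (List.Perm.eq_of_sortedLE
        (Tuple.monotone_sort i).sortedLE_ofFn (Tuple.monotone_sort j).sortedLE_ofFn hperm)
    refine mem_orbit_iff.mpr ⟨σj.symm.trans σi, funext fun x => ?_⟩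
    have := congrFun heq (σj.symm x)
    simp only [Function.comp_apply] at this ⊢
    rw [Equiv.trans_apply, this, Equiv.apply_symm_apply]
  · intro h
    obtain ⟨σ, rfl⟩ := mem_orbit_iff.mp h
    rw [msetOf, msetOf]
    have h2 : Multiset.map (i ∘ σ) Finset.univ.val
        = Multiset.map i (Multiset.map σ Finset.univ.val) :=
      (Multiset.map_map i σ Finset.univ.val).symm
    rw [h2, Multiset.map_univ_val_equiv]

/-- a cell realizing a given multiset -/
lemma exists_cell_of_sym (m : Sym (Fin r) T) : ∃ i : Cell r T, msetOf i = m.val := by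
  obtain ⟨l, hl⟩ : ∃ l : List (Fin r), (l : Multiset (Fin r)) = m.val :=
    ⟨m.val.toList, Multiset.coe_toList m.val⟩
  have hlen : l.length = T := by
    have := m.2
    rw [← hl] at this
    simpa using this
  refine ⟨fun k => l.get (Fin.cast hlen.symm k), ?_⟩
  rw [msetOf_coe, ← hl]
  congr 1
  apply List.ext_getElem (by simp [hlen])
  intro n h1 h2
  simp [List.getElem_ofFn]

noncomputable def orbitSymEquiv (r T : ℕ) :
    {O : Finset (Cell r T) // ∃ i : Cell r T, O = orbit i} ≃ Sym (Fin r) T := by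
  refine Equiv.ofBijective (fun O => ⟨msetOf O.2.choose, msetOf_card _⟩) ⟨?_, ?_⟩
  · intro O₁ O₂ h
    have h' : msetOf O₁.2.choose = msetOf O₂.2.choose := by
      simpa [Sym] using congrArg Subtype.val h
    have hmem := msetOf_eq_iff.mp h'
    apply Subtype.ext
    rw [O₁.2.choose_spec, O₂.2.choose_spec]
    exact (orbit_eq_of_mem hmem).symm
  · intro m
    obtain ⟨c, hc⟩ := exists_cell_of_sym m
    refine ⟨⟨orbit c, ⟨c, rfl⟩⟩, ?_⟩
    set O : {O : Finset (Cell r T) // ∃ i : Cell r T, O = orbit i} := ⟨orbit c, ⟨c, rfl⟩⟩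
    have hspec : O.val = orbit O.2.choose := O.2.choose_spec
    have hw : O.2.choose ∈ orbit c := by
      have h := mem_orbit_self O.2.choose
      rwa [← O.2.choose_spec] at h
    apply Subtype.ext
    simp only
    rw [← (msetOf_eq_iff.mpr hw), hc]

lemma card_orbitSet (r T : ℕ) :
    Fintype.card {O : Finset (Cell r T) // ∃ i : Cell r T, O = orbit i}
      = (r + T - 1).choose T := by
  rw [Fintype.card_congr (orbitSymEquiv r T), Sym.card_sym_eq_choose, Fintype.card_fin]


def pairSigma (T : ℕ) : PairIdx T ≃ Σ j : Fin T, Fin j.val where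
  toFun p := ⟨p.val.2, ⟨p.val.1.val, p.2⟩⟩
  invFun x := ⟨(⟨x.2.val, lt_trans x.2.isLt x.1.isLt⟩, x.1), x.2.isLt⟩
  left_inv p := rfl
  right_inv x := rfl

lemma two_mul_card_pairIdx (T : ℕ) :
    2 * Fintype.card (PairIdx T) = T * (T - 1) := by
  rw [Fintype.card_congr (pairSigma T), Fintype.card_sigma]
  simp only [Fintype.card_fin]
  rw [Fin.sum_univ_eq_sum_range (fun j => j) T, mul_comm]
  exact Finset.sum_range_id_mul_two T

lemma card_pairIdx_pos (hT : 2 ≤ T) : 0 < Fintype.card (PairIdx T) :=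
  Fintype.card_pos_iff.mpr ⟨⟨(⟨0, by omega⟩, ⟨1, by omega⟩), by simp [Fin.lt_def]⟩⟩


instance : DecidableEq (PairIdx T) := fun a b =>
  decidable_of_iff (a.val = b.val) Subtype.ext_iff.symm

lemma pairIdx_eq_iff {p q : PairIdx T} :
    q = p ↔ (q.val.1 = p.val.1 ∧ q.val.2 = p.val.2) :=
  ⟨fun h => by subst h; exact ⟨rfl, rfl⟩,
   fun h => Subtype.ext (Prod.ext h.1 h.2)⟩


lemma quad_zero {A B C x0 x1 x2 : ℝ} (h01 : x0 ≠ x1) (h02 : x0 ≠ x2) (h12 : x1 ≠ x2)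
    (e0 : A * x0 ^ 2 + B * x0 + C = 0) (e1 : A * x1 ^ 2 + B * x1 + C = 0)
    (e2 : A * x2 ^ 2 + B * x2 + C = 0) :
    A = 0 ∧ B = 0 ∧ C = 0 := by
  have h1 : (x1 - x0) * (A * (x1 + x0) + B) = 0 := by linear_combination e1 - e0
  have h2 : (x2 - x0) * (A * (x2 + x0) + B) = 0 := by linear_combination e2 - e0
  have h1' : A * (x1 + x0) + B = 0 :=
    (mul_eq_zero.mp h1).resolve_left (sub_ne_zero.mpr (Ne.symm h01))
  have h2' : A * (x2 + x0) + B = 0 :=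
    (mul_eq_zero.mp h2).resolve_left (sub_ne_zero.mpr (Ne.symm h02))
  have hA : A = 0 := by
    have h3 : A * (x2 - x1) = 0 := by linear_combination h2' - h1'
    exact (mul_eq_zero.mp h3).resolve_right (sub_ne_zero.mpr (Ne.symm h12))
  have hB : B = 0 := by linear_combination h1' - (x1 + x0) * hA
  exact ⟨hA, hB, by linear_combination e0 - x0^2 * hA - x0 * hB⟩

lemma core_indep (hr : 3 ≤ r) (hT : 1 ≤ T) (u : Fin r → ℝ) (hu : StrictMono u)
    (α β : Fin T → ℝ) (γ : PairIdx T → ℝ)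
    (H : ∀ i : Cell r T,
      (∑ s, α s * u (i s)) + (∑ s, β s * u (i s) ^ 2)
        + (∑ p : PairIdx T, γ p * (u (i p.val.1) * u (i p.val.2))) = 0) :
    (∀ s, α s = 0) ∧ (∀ s, β s = 0) ∧ (∀ p, γ p = 0) := by
  have h3 : (0:ℕ) < r ∧ (1:ℕ) < r ∧ (2:ℕ) < r := by omega
  set x0 := u ⟨0, h3.1⟩ with hx0
  set x1 := u ⟨1, h3.2.1⟩ with hx1
  set x2 := u ⟨2, h3.2.2⟩ with hx2
  have h01 : x0 ≠ x1 := ne_of_lt (hu (by simp [Fin.lt_def]))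
  have h02 : x0 ≠ x2 := ne_of_lt (hu (by simp [Fin.lt_def]))
  have h12 : x1 ≠ x2 := ne_of_lt (hu (by simp [Fin.lt_def]))
  set Sα := ∑ s, α s with hSα
  set Sβ := ∑ s, β s with hSβ
  set Sγ := ∑ p : PairIdx T, γ p with hSγ
  set G : Fin T → ℝ := fun s => ∑ p : PairIdx T,
    γ p * ((if p.val.1 = s then (1:ℝ) else 0) + (if p.val.2 = s then (1:ℝ) else 0)) with hG
  -- E1: evaluation at the one-coordinate cells
  have E1 : ∀ (s : Fin T) (a b : Fin r),
      β s * (u a) ^ 2 + (α s + u b * G s) * (u a)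
        + (Sα * u b + Sβ * (u b) ^ 2 + Sγ * (u b) ^ 2
            - u b * α s - (u b) ^ 2 * β s - (u b) ^ 2 * G s) = 0 := by
    intro s a b
    have hi := H (fun z => if z = s then a else b)
    have e1 : (∑ h, α h * u (if h = s then a else b))
        = Sα * u b + (u a - u b) * α s := by
      have hpt : ∀ h ∈ univ, α h * u (if h = s then a else b)
          = α h * u b + (u a - u b) * (if h = s then α h else 0) := by
        intro h _
        by_cases hh : h = s <;> simp [hh] <;> ring
      rw [Finset.sum_congr rfl hpt, Finset.sum_add_distrib, ← Finset.sum_mul,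
        ← Finset.mul_sum, Finset.sum_ite_eq' univ s α, if_pos (mem_univ s)]
    have e2 : (∑ h, β h * u (if h = s then a else b) ^ 2)
        = Sβ * (u b) ^ 2 + ((u a) ^ 2 - (u b) ^ 2) * β s := by
      have hpt : ∀ h ∈ univ, β h * u (if h = s then a else b) ^ 2
          = β h * (u b) ^ 2 + ((u a) ^ 2 - (u b) ^ 2) * (if h = s then β h else 0) := by
        intro h _
        by_cases hh : h = s <;> simp [hh] <;> ring
      rw [Finset.sum_congr rfl hpt, Finset.sum_add_distrib, ← Finset.sum_mul,
        ← Finset.mul_sum, Finset.sum_ite_eq' univ s β, if_pos (mem_univ s)]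
    have e3 : (∑ p : PairIdx T, γ p *
          (u (if p.val.1 = s then a else b) * u (if p.val.2 = s then a else b)))
        = Sγ * (u b * u b) + (u a * u b - u b * u b) * G s := by
      have hpt : ∀ p ∈ (univ : Finset (PairIdx T)), γ p *
            (u (if p.val.1 = s then a else b) * u (if p.val.2 = s then a else b))
          = γ p * (u b * u b) + (u a * u b - u b * u b) *
              (γ p * ((if p.val.1 = s then (1:ℝ) else 0) + (if p.val.2 = s then (1:ℝ) else 0))) := by
        intro p _
        have hne : p.val.1 ≠ p.val.2 := ne_of_lt p.2
        by_cases h1 : p.val.1 = s <;> by_cases h2 : p.val.2 = s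
        · exact absurd (h1.trans h2.symm) hne
        · simp [h1, h2]; ring
        · simp [h1, h2]; ring
        · simp [h1, h2]
      rw [Finset.sum_congr rfl hpt, Finset.sum_add_distrib, ← Finset.sum_mul,
        ← Finset.mul_sum]
    rw [e1, e2, e3] at hi
    linear_combination hi
  -- step 1: β s = 0, G s = 0, α s = 0
  have key1 : ∀ s : Fin T, β s = 0 ∧ α s = 0 ∧ G s = 0 := by
    intro s
    have q : ∀ b : Fin r, β s = 0 ∧ (α s + u b * G s) = 0 ∧
        (Sα * u b + Sβ * (u b) ^ 2 + Sγ * (u b) ^ 2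
          - u b * α s - (u b) ^ 2 * β s - (u b) ^ 2 * G s) = 0 := fun b =>
      quad_zero h01 h02 h12 (E1 s ⟨0, h3.1⟩ b) (E1 s ⟨1, h3.2.1⟩ b) (E1 s ⟨2, h3.2.2⟩ b)
    have hβ : β s = 0 := (q ⟨0, h3.1⟩).1
    have hq0 := (q ⟨0, h3.1⟩).2.1
    have hq1 := (q ⟨1, h3.2.1⟩).2.1
    have hGs : G s = 0 := by
      have : (x0 - x1) * G s = 0 := by linear_combination hq0 - hq1
      exact (mul_eq_zero.mp this).resolve_left (sub_ne_zero.mpr h01)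
    exact ⟨hβ, by linear_combination hq0 - u ⟨0, h3.1⟩ * hGs, hGs⟩
  have hβ0 : ∀ s, β s = 0 := fun s => (key1 s).1
  have hα0 : ∀ s, α s = 0 := fun s => (key1 s).2.1
  have hG0 : ∀ s, G s = 0 := fun s => (key1 s).2.2
  -- step 2: Sα = 0, Sγ = 0
  have hSα0 : Sα = 0 := by rw [hSα]; exact Finset.sum_eq_zero fun s _ => hα0 s
  have hSβ0 : Sβ = 0 := by rw [hSβ]; exact Finset.sum_eq_zero fun s _ => hβ0 s
  have hSγ0 : Sγ = 0 := by
    have s : Fin T := ⟨0, by omega⟩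
    have q : ∀ b : Fin r,
        (Sα * u b + Sβ * (u b) ^ 2 + Sγ * (u b) ^ 2
          - u b * α s - (u b) ^ 2 * β s - (u b) ^ 2 * G s) = 0 := fun b =>
      (quad_zero h01 h02 h12 (E1 s ⟨0, h3.1⟩ b) (E1 s ⟨1, h3.2.1⟩ b)
        (E1 s ⟨2, h3.2.2⟩ b)).2.2
    have q' : ∀ b : Fin r, (Sβ + Sγ) * (u b) ^ 2 + Sα * u b + 0 = 0 := by
      intro b
      have := q b
      rw [hα0 s, hβ0 s, hG0 s] at this
      linear_combination this
    have := quad_zero h01 h02 h12 (q' ⟨0, h3.1⟩) (q' ⟨1, h3.2.1⟩) (q' ⟨2, h3.2.2⟩)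
    linarith [this.1, hSβ0]
  -- step 3: γ p = 0
  refine ⟨hα0, hβ0, ?_⟩
  intro p
  have hi := H (fun z => if z = p.val.1 ∨ z = p.val.2 then ⟨0, h3.1⟩ else ⟨1, h3.2.1⟩)
  have ea : (∑ h, α h * u (if h = p.val.1 ∨ h = p.val.2 then
      (⟨0, h3.1⟩ : Fin r) else ⟨1, h3.2.1⟩)) = 0 :=
    Finset.sum_eq_zero fun h _ => by rw [hα0 h, zero_mul]
  have eb : (∑ h, β h * u (if h = p.val.1 ∨ h = p.val.2 then
      (⟨0, h3.1⟩ : Fin r) else ⟨1, h3.2.1⟩) ^ 2) = 0 :=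
    Finset.sum_eq_zero fun h _ => by rw [hβ0 h, zero_mul]
  have hp' := p.2
  have hSγ0' : (∑ q : PairIdx T, γ q) = 0 := by rw [← hSγ]; exact hSγ0
  have hG0' : ∀ s : Fin T, (∑ q : PairIdx T,
      γ q * ((if q.val.1 = s then (1:ℝ) else 0) + (if q.val.2 = s then (1:ℝ) else 0))) = 0 := by
    intro s
    have h := hG0 s
    rw [hG] at h
    exact h
  have ec : (∑ q : PairIdx T, γ q *
        (u (if q.val.1 = p.val.1 ∨ q.val.1 = p.val.2 then (⟨0, h3.1⟩ : Fin r) else ⟨1, h3.2.1⟩) *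
         u (if q.val.2 = p.val.1 ∨ q.val.2 = p.val.2 then (⟨0, h3.1⟩ : Fin r) else ⟨1, h3.2.1⟩)))
      = (∑ q : PairIdx T, γ q) * (x1 * x1)
        + (x0 * x1 - x1 * x1) * (∑ q : PairIdx T,
            γ q * ((if q.val.1 = p.val.1 then (1:ℝ) else 0) + (if q.val.2 = p.val.1 then (1:ℝ) else 0)))
        + (x0 * x1 - x1 * x1) * (∑ q : PairIdx T,
            γ q * ((if q.val.1 = p.val.2 then (1:ℝ) else 0) + (if q.val.2 = p.val.2 then (1:ℝ) else 0)))
        + (x0 * x0 - 2 * (x0 * x1) + x1 * x1) * γ p := by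
    have hpt : ∀ q ∈ (univ : Finset (PairIdx T)), γ q *
        (u (if q.val.1 = p.val.1 ∨ q.val.1 = p.val.2 then (⟨0, h3.1⟩ : Fin r) else ⟨1, h3.2.1⟩) *
         u (if q.val.2 = p.val.1 ∨ q.val.2 = p.val.2 then (⟨0, h3.1⟩ : Fin r) else ⟨1, h3.2.1⟩))
        = γ q * (x1 * x1)
          + (x0 * x1 - x1 * x1) *
              (γ q * ((if q.val.1 = p.val.1 then (1:ℝ) else 0) + (if q.val.2 = p.val.1 then (1:ℝ) else 0)))
          + (x0 * x1 - x1 * x1) *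
              (γ q * ((if q.val.1 = p.val.2 then (1:ℝ) else 0) + (if q.val.2 = p.val.2 then (1:ℝ) else 0)))
          + (x0 * x0 - 2 * (x0 * x1) + x1 * x1) * (if q = p then γ q else 0) := by
      intro q _
      have hq' := q.2
      simp only [pairIdx_eq_iff, hx0, hx1]
      have hpne : p.val.1 ≠ p.val.2 := ne_of_lt hp'
      have hqne : q.val.1 ≠ q.val.2 := ne_of_lt hq'
      by_cases h11 : q.val.1 = p.val.1 <;> by_cases h12 : q.val.1 = p.val.2 <;>
        by_cases h21 : q.val.2 = p.val.1 <;> by_cases h22 : q.val.2 = p.val.2 <;>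
        first
          | (exfalso; simp only [Fin.ext_iff] at h11 h12 h21 h22 hpne hqne
             simp only [Fin.lt_def] at hq' hp'; omega)
          | (simp [h11, h12, h21, h22, hpne, hqne, hpne.symm, hqne.symm]; ring)
          | (simp [h11, h12, h21, h22, hpne, hqne, hpne.symm, hqne.symm])
    rw [Finset.sum_congr rfl hpt]
    simp only [Finset.sum_add_distrib]
    rw [← Finset.sum_mul, ← Finset.mul_sum, ← Finset.mul_sum, ← Finset.mul_sum,
      Finset.sum_ite_eq' univ p γ, if_pos (mem_univ p)]
  rw [ea, eb, ec, hSγ0', hG0' p.val.1, hG0' p.val.2] at hi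
  have hfac : γ p * (x0 - x1) ^ 2 = 0 := by linear_combination hi
  have hne : (x0 - x1) ^ 2 ≠ 0 := pow_ne_zero _ (sub_ne_zero.mpr h01)
  exact (mul_eq_zero.mp hfac).resolve_right hne


/-- extension of coefficients to ℕ -/
def extf {n : ℕ} (c : Fin n → ℝ) : ℕ → ℝ := fun m => if hm : m < n then c ⟨m, hm⟩ else 0

lemma extf_zero {n : ℕ} (c : Fin n → ℝ) : ∀ m, n ≤ m → extf c m = 0 := by
  intro m hm
  rw [extf, dif_neg (by omega)]

lemma convert_tel {n : ℕ} (hn : 1 ≤ n) (c : Fin (n - 1) → ℝ) (w : Fin n → ℝ)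
    (lt1 : ∀ h : Fin (n - 1), h.val < n) (lt2 : ∀ h : Fin (n - 1), h.val + 1 < n) :
    (∑ h : Fin (n - 1), c h * (w ⟨h.val, lt1 h⟩ - w ⟨h.val + 1, lt2 h⟩))
      = ∑ s : Fin n, (extf c s.val - prevf (extf c) s.val) * w s := by
  set v : ℕ → ℝ := fun m => if hm : m < n then w ⟨m, hm⟩ else 0 with hvdef
  have step1 : (∑ h : Fin (n - 1), c h * (w ⟨h.val, lt1 h⟩ - w ⟨h.val + 1, lt2 h⟩))
      = ∑ m ∈ Finset.range (n - 1), extf c m * (v m - v (m + 1)) := by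
    rw [← Fin.sum_univ_eq_sum_range (fun m => extf c m * (v m - v (m + 1))) (n - 1)]
    refine Finset.sum_congr rfl fun h _ => ?_
    rw [hvdef]
    simp only [extf]
    rw [dif_pos h.isLt, dif_pos (lt1 h), dif_pos (lt2 h)]
  have step4 : ∑ m ∈ Finset.range n, (extf c m - prevf (extf c) m) * v m
      = ∑ s : Fin n, (extf c s.val - prevf (extf c) s.val) * w s := by
    rw [← Fin.sum_univ_eq_sum_range (fun m => (extf c m - prevf (extf c) m) * v m) n]
    refine Finset.sum_congr rfl fun s _ => ?_
    rw [hvdef]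
    simp only [dif_pos s.isLt]
  rw [step1, ← telescope (extf c) v (n - 1) (extf_zero c), Nat.sub_add_cancel hn, step4]


set_option maxHeartbeats 1600000 in
/-- for `r ≥ 3` and strictly increasing scores, the design matrix `X`
has full column rank, and its number of columns is `(T² + 3T − 6)/2 + C(r+T−1, T)`. -/
theorem stmt19 (r T : ℕ) (hr : 3 ≤ r) (hT : 2 ≤ T)
    (u : Fin r → ℝ) (hu : StrictMono u) :
    LinearIndependent ℝ (colFam (r := r) (T := T) u) ∧
    Fintype.card (ColIdx r T) = (T ^ 2 + 3 * T - 6) / 2 + (r + T - 1).choose T := by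
  have hK2 := two_mul_card_pairIdx T
  have hKpos := card_pairIdx_pos hT
  set K := Fintype.card (PairIdx T) with hKdef
  constructor
  · rw [Fintype.linearIndependent_iff]
    intro g hg
    -- pointwise version of the dependence relation
    have hpt : ∀ i : Cell r T, (∑ c : ColIdx r T, g c * colFam u c i) = 0 := by
      intro i
      have h0 := congrFun hg i
      rw [Finset.sum_apply] at h0
      simp only [Pi.smul_apply, smul_eq_mul, Pi.zero_apply] at h0
      exact h0
    have hsplit : ∀ i : Cell r T,
        (∑ h : Fin (T - 1), g (Sum.inl (Sum.inl h)) * colFam u (Sum.inl (Sum.inl h)) i)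
        + (∑ h : Fin (T - 1), g (Sum.inl (Sum.inr h)) * colFam u (Sum.inl (Sum.inr h)) i)
        + ((∑ k : Fin (K - 1), g (Sum.inr (Sum.inl k)) * colFam u (Sum.inr (Sum.inl k)) i)
        + (∑ O : {O : Finset (Cell r T) // ∃ i₀ : Cell r T, O = orbit i₀},
            g (Sum.inr (Sum.inr O)) * colFam u (Sum.inr (Sum.inr O)) i)) = 0 := by
      intro i
      have h0 := hpt i
      rwa [Fintype.sum_sum_type, Fintype.sum_sum_type, Fintype.sum_sum_type] at h0
    -- Step A: orbit indicator coefficients vanish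
    have horb : ∀ O : {O : Finset (Cell r T) // ∃ i₀ : Cell r T, O = orbit i₀},
        g (Sum.inr (Sum.inr O)) = 0 := by
      have hsym : ∀ i : Cell r T,
          (∑ O : {O : Finset (Cell r T) // ∃ i₀ : Cell r T, O = orbit i₀},
            g (Sum.inr (Sum.inr O)) * (if i ∈ O.val then (1:ℝ) else 0)) = 0 := by
        intro i
        have h0 : ∑ σ : Equiv.Perm (Fin T),
            ((∑ h : Fin (T - 1), g (Sum.inl (Sum.inl h)) * colFam u (Sum.inl (Sum.inl h)) (i ∘ σ))
            + (∑ h : Fin (T - 1), g (Sum.inl (Sum.inr h)) * colFam u (Sum.inl (Sum.inr h)) (i ∘ σ))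
            + ((∑ k : Fin (K - 1), g (Sum.inr (Sum.inl k)) * colFam u (Sum.inr (Sum.inl k)) (i ∘ σ))
            + (∑ O : {O : Finset (Cell r T) // ∃ i₀ : Cell r T, O = orbit i₀},
                g (Sum.inr (Sum.inr O)) * colFam u (Sum.inr (Sum.inr O)) (i ∘ σ)))) = 0 :=
          Finset.sum_eq_zero fun σ _ => hsplit (i ∘ σ)
        rw [Finset.sum_add_distrib, Finset.sum_add_distrib, Finset.sum_add_distrib] at h0
        have hb1 : (∑ σ : Equiv.Perm (Fin T), ∑ h : Fin (T - 1),
            g (Sum.inl (Sum.inl h)) * colFam u (Sum.inl (Sum.inl h)) (i ∘ σ)) = 0 := by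
          rw [Finset.sum_comm]
          refine Finset.sum_eq_zero fun h _ => ?_
          have hrw : (∑ σ : Equiv.Perm (Fin T),
              g (Sum.inl (Sum.inl h)) * colFam u (Sum.inl (Sum.inl h)) (i ∘ σ))
              = g (Sum.inl (Sum.inl h)) *
                ((∑ σ : Equiv.Perm (Fin T), u (i (σ ⟨h.val, by have := h.isLt; omega⟩)))
                  - (∑ σ : Equiv.Perm (Fin T), u (i (σ ⟨h.val + 1, by have := h.isLt; omega⟩)))) := by
            rw [← Finset.sum_sub_distrib, Finset.mul_sum]
            rfl
          rw [hrw, sum_perm_coord (fun z => u (i z)), sub_self, mul_zero]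
        have hb2 : (∑ σ : Equiv.Perm (Fin T), ∑ h : Fin (T - 1),
            g (Sum.inl (Sum.inr h)) * colFam u (Sum.inl (Sum.inr h)) (i ∘ σ)) = 0 := by
          rw [Finset.sum_comm]
          refine Finset.sum_eq_zero fun h _ => ?_
          have hrw : (∑ σ : Equiv.Perm (Fin T),
              g (Sum.inl (Sum.inr h)) * colFam u (Sum.inl (Sum.inr h)) (i ∘ σ))
              = g (Sum.inl (Sum.inr h)) *
                ((∑ σ : Equiv.Perm (Fin T), (fun z => u (i z) ^ 2) (σ ⟨h.val, by have := h.isLt; omega⟩))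
                  - (∑ σ : Equiv.Perm (Fin T), (fun z => u (i z) ^ 2) (σ ⟨h.val + 1, by have := h.isLt; omega⟩))) := by
            rw [← Finset.sum_sub_distrib, Finset.mul_sum]
            rfl
          rw [hrw, sum_perm_coord (fun z => u (i z) ^ 2), sub_self, mul_zero]
        have hb3 : (∑ σ : Equiv.Perm (Fin T), ∑ k : Fin (K - 1),
            g (Sum.inr (Sum.inl k)) * colFam u (Sum.inr (Sum.inl k)) (i ∘ σ)) = 0 := by
          rw [Finset.sum_comm]
          refine Finset.sum_eq_zero fun k _ => ?_
          have hrw : (∑ σ : Equiv.Perm (Fin T),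
              g (Sum.inr (Sum.inl k)) * colFam u (Sum.inr (Sum.inl k)) (i ∘ σ))
              = g (Sum.inr (Sum.inl k)) *
                ((∑ σ : Equiv.Perm (Fin T), (fun a b => u (i a) * u (i b))
                    (σ (pairEnum T ⟨k.val, by have := k.isLt; omega⟩).val.1)
                    (σ (pairEnum T ⟨k.val, by have := k.isLt; omega⟩).val.2))
                  - (∑ σ : Equiv.Perm (Fin T), (fun a b => u (i a) * u (i b))
                    (σ (pairEnum T ⟨k.val + 1, by have := k.isLt; omega⟩).val.1)
                    (σ (pairEnum T ⟨k.val + 1, by have := k.isLt; omega⟩).val.2))) := by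
            rw [← Finset.sum_sub_distrib, Finset.mul_sum]
            rfl
          rw [hrw, sum_perm_pair (fun a b => u (i a) * u (i b))
            (ne_of_lt (pairEnum T ⟨k.val, by have := k.isLt; omega⟩).2)
            (ne_of_lt (pairEnum T ⟨k.val + 1, by have := k.isLt; omega⟩).2),
            sub_self, mul_zero]
        have hb4 : (∑ σ : Equiv.Perm (Fin T),
            ∑ O : {O : Finset (Cell r T) // ∃ i₀ : Cell r T, O = orbit i₀},
              g (Sum.inr (Sum.inr O)) * colFam u (Sum.inr (Sum.inr O)) (i ∘ σ))
            = (Fintype.card (Equiv.Perm (Fin T)) : ℝ) *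
              (∑ O : {O : Finset (Cell r T) // ∃ i₀ : Cell r T, O = orbit i₀},
                g (Sum.inr (Sum.inr O)) * (if i ∈ O.val then (1:ℝ) else 0)) := by
          have hconst : ∀ σ : Equiv.Perm (Fin T),
              (∑ O : {O : Finset (Cell r T) // ∃ i₀ : Cell r T, O = orbit i₀},
                g (Sum.inr (Sum.inr O)) * colFam u (Sum.inr (Sum.inr O)) (i ∘ σ))
              = ∑ O : {O : Finset (Cell r T) // ∃ i₀ : Cell r T, O = orbit i₀},
                g (Sum.inr (Sum.inr O)) * (if i ∈ O.val then (1:ℝ) else 0) := by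
            intro σ
            refine Finset.sum_congr rfl fun O _ => ?_
            obtain ⟨j, hj⟩ := O.2
            have : colFam u (Sum.inr (Sum.inr O)) (i ∘ σ) = (if i ∈ O.val then (1:ℝ) else 0) := by
              show (if i ∘ σ ∈ O.val then (1:ℝ) else 0) = _
              rw [hj]
              simp only [comp_mem_orbit_iff]
            rw [this]
          rw [Finset.sum_congr rfl fun σ _ => hconst σ, Finset.sum_const, nsmul_eq_mul,
            Finset.card_univ]
        rw [hb1, hb2, hb3, hb4, zero_add, zero_add, zero_add] at h0
        rcases mul_eq_zero.mp h0 with h | h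
        · exact absurd h (by positivity)
        · exact h
      intro O₀
      obtain ⟨j₀, hj₀⟩ := O₀.2
      have h0 := hsym j₀
      have hcongr : ∀ O ∈ (Finset.univ : Finset {O : Finset (Cell r T) // ∃ i₀ : Cell r T, O = orbit i₀}),
          g (Sum.inr (Sum.inr O)) * (if j₀ ∈ O.val then (1:ℝ) else 0)
            = if O = O₀ then g (Sum.inr (Sum.inr O)) else 0 := by
        intro O _
        obtain ⟨j, hj⟩ := O.2
        by_cases hm : j₀ ∈ O.val
        · have hOeq : O = O₀ := by
            apply Subtype.ext
            rw [hj, hj₀]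
            rw [hj] at hm
            exact (orbit_eq_of_mem hm).symm
          rw [if_pos hm, if_pos hOeq, mul_one]
        · have hOne : O ≠ O₀ := by
            intro hE
            apply hm
            rw [hE, hj₀]
            exact mem_orbit_self j₀
          rw [if_neg hm, if_neg hOne, mul_zero]
      rw [Finset.sum_congr rfl hcongr, Finset.sum_ite_eq' Finset.univ O₀
        (fun O => g (Sum.inr (Sum.inr O))), if_pos (Finset.mem_univ O₀)] at h0
      exact h0
    -- Step B: reduced relation and telescoped coefficients
    have hred : ∀ i : Cell r T,
        (∑ s : Fin T, (extf (fun h => g (Sum.inl (Sum.inl h))) s.val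
            - prevf (extf (fun h => g (Sum.inl (Sum.inl h)))) s.val) * u (i s))
        + (∑ s : Fin T, (extf (fun h => g (Sum.inl (Sum.inr h))) s.val
            - prevf (extf (fun h => g (Sum.inl (Sum.inr h)))) s.val) * u (i s) ^ 2)
        + (∑ p : PairIdx T, (extf (fun k => g (Sum.inr (Sum.inl k))) ((pairEnum T).symm p).val
            - prevf (extf (fun k => g (Sum.inr (Sum.inl k)))) ((pairEnum T).symm p).val)
              * (u (i p.val.1) * u (i p.val.2))) = 0 := by
      intro i
      have h4 : (∑ O : {O : Finset (Cell r T) // ∃ i₀ : Cell r T, O = orbit i₀},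
          g (Sum.inr (Sum.inr O)) * colFam u (Sum.inr (Sum.inr O)) i) = 0 :=
        Finset.sum_eq_zero fun O _ => by rw [horb O, zero_mul]
      have h0 := hsplit i
      rw [h4, add_zero] at h0
      have hc1 : (∑ h : Fin (T - 1),
          g (Sum.inl (Sum.inl h)) * colFam u (Sum.inl (Sum.inl h)) i)
          = ∑ s : Fin T, (extf (fun h => g (Sum.inl (Sum.inl h))) s.val
              - prevf (extf (fun h => g (Sum.inl (Sum.inl h)))) s.val) * u (i s) := by
        rw [← convert_tel (n := T) (by omega) (fun h => g (Sum.inl (Sum.inl h)))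
          (fun s => u (i s)) (fun h => by have := h.isLt; omega) (fun h => by have := h.isLt; omega)]
        rfl
      have hc2 : (∑ h : Fin (T - 1),
          g (Sum.inl (Sum.inr h)) * colFam u (Sum.inl (Sum.inr h)) i)
          = ∑ s : Fin T, (extf (fun h => g (Sum.inl (Sum.inr h))) s.val
              - prevf (extf (fun h => g (Sum.inl (Sum.inr h)))) s.val) * u (i s) ^ 2 := by
        rw [← convert_tel (n := T) (by omega) (fun h => g (Sum.inl (Sum.inr h)))
          (fun s => u (i s) ^ 2) (fun h => by have := h.isLt; omega) (fun h => by have := h.isLt; omega)]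
        rfl
      have hc3 : (∑ k : Fin (K - 1),
          g (Sum.inr (Sum.inl k)) * colFam u (Sum.inr (Sum.inl k)) i)
          = ∑ p : PairIdx T, (extf (fun k => g (Sum.inr (Sum.inl k))) ((pairEnum T).symm p).val
              - prevf (extf (fun k => g (Sum.inr (Sum.inl k)))) ((pairEnum T).symm p).val)
                * (u (i p.val.1) * u (i p.val.2)) := by
        rw [← Equiv.sum_comp (pairEnum T).toEquiv
          (fun p => (extf (fun k => g (Sum.inr (Sum.inl k))) ((pairEnum T).symm p).val
              - prevf (extf (fun k => g (Sum.inr (Sum.inl k)))) ((pairEnum T).symm p).val)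
                * (u (i p.val.1) * u (i p.val.2)))]
        have hmid : ∀ k : Fin K,
            (extf (fun k => g (Sum.inr (Sum.inl k))) ((pairEnum T).symm ((pairEnum T).toEquiv k)).val
              - prevf (extf (fun k => g (Sum.inr (Sum.inl k)))) ((pairEnum T).symm ((pairEnum T).toEquiv k)).val)
                * (u (i ((pairEnum T).toEquiv k).val.1) * u (i ((pairEnum T).toEquiv k).val.2))
            = (extf (fun k => g (Sum.inr (Sum.inl k))) k.val
              - prevf (extf (fun k => g (Sum.inr (Sum.inl k)))) k.val)
                * (u (i (pairEnum T k).val.1) * u (i (pairEnum T k).val.2)) := by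
          intro k
          have : (pairEnum T).symm ((pairEnum T).toEquiv k) = k := (pairEnum T).symm_apply_apply k
          rw [this]
          rfl
        rw [Finset.sum_congr rfl fun k _ => hmid k]
        rw [← convert_tel (n := K) (by omega) (fun k => g (Sum.inr (Sum.inl k)))
          (fun k => u (i (pairEnum T k).val.1) * u (i (pairEnum T k).val.2))
          (fun k => by have := k.isLt; omega) (fun k => by have := k.isLt; omega)]
        rfl
      rw [hc1, hc2, hc3] at h0
      exact h0
    obtain ⟨hA, hB, hC⟩ := core_indep hr (by omega) u hu
      (fun s => extf (fun h => g (Sum.inl (Sum.inl h))) s.val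
          - prevf (extf (fun h => g (Sum.inl (Sum.inl h)))) s.val)
      (fun s => extf (fun h => g (Sum.inl (Sum.inr h))) s.val
          - prevf (extf (fun h => g (Sum.inl (Sum.inr h)))) s.val)
      (fun p => extf (fun k => g (Sum.inr (Sum.inl k))) ((pairEnum T).symm p).val
          - prevf (extf (fun k => g (Sum.inr (Sum.inl k)))) ((pairEnum T).symm p).val)
      hred
    have hz1 : ∀ m, extf (fun h => g (Sum.inl (Sum.inl h))) m = 0 := by
      refine untelescope _ (T - 1) (fun s hs => ?_) (extf_zero _)
      exact hA ⟨s, by omega⟩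
    have hz2 : ∀ m, extf (fun h => g (Sum.inl (Sum.inr h))) m = 0 := by
      refine untelescope _ (T - 1) (fun s hs => ?_) (extf_zero _)
      exact hB ⟨s, by omega⟩
    have hz3 : ∀ m, extf (fun k => g (Sum.inr (Sum.inl k))) m = 0 := by
      refine untelescope _ (K - 1) (fun s hs => ?_) (extf_zero _)
      have h0 := hC (pairEnum T ⟨s, by omega⟩)
      simpa [(pairEnum T).symm_apply_apply] using h0
    intro c
    match c with
    | Sum.inl (Sum.inl h) =>
        have h0 := hz1 h.val
        rw [extf, dif_pos h.isLt] at h0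
        exact h0
    | Sum.inl (Sum.inr h) =>
        have h0 := hz2 h.val
        rw [extf, dif_pos h.isLt] at h0
        exact h0
    | Sum.inr (Sum.inl k) =>
        have h0 := hz3 k.val
        rw [extf, dif_pos k.isLt] at h0
        exact h0
    | Sum.inr (Sum.inr O) => exact horb O
  · -- cardinality
    have hcard : Fintype.card (ColIdx r T)
        = (T - 1) + (T - 1) + ((K - 1) + (r + T - 1).choose T) := by
      simp only [Fintype.card_sum, Fintype.card_fin]
      rw [card_orbitSet, hKdef]
    rw [hcard]
    obtain ⟨t, rfl⟩ : ∃ t, T = t + 2 := ⟨T - 2, by omega⟩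
    obtain ⟨q, hq⟩ : ∃ q, q = t * t := ⟨_, rfl⟩
    have h1 : 2 * K = q + 3 * t + 2 := by
      rw [hK2, hq, show t + 2 - 1 = t + 1 from rfl]
      ring
    have h2 : (t + 2) ^ 2 = q + 4 * t + 4 := by rw [hq]; ring
    rw [h2]
    generalize (r + (t + 2) - 1).choose (t + 2) = C
    omega

end GSf
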